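/- arXiv:2312.03688 — 3 statements merged into one kernel-verified Lean document; each statement's English description precedes it below -/
import Mathlib

section
/- Let q ≥ 2, and let a, b, r, r₁, …, r_a be positive integers with a ≥ b and r_i ≤ r for all i. Let Π = Π(r₁,…,r_a; b, q) be the graph whose vertices are tuples (v₁,…,v_a) with v_i ∈ [q]^{r_i}, where two tuples (v₁,…,v_a) and (u₁,…,u_a) are adjacent if there is a set I ⊆ [a] with |I| = b such that for each i ∈ I the sequences u_i and v_i are equal or close. Then Δ(Π) ≤ r^{2b} · a^b · q^{ar − b(r−1)}. -/
noncomputable section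

namespace TwwPaper

open Finset

variable {V : Type*}

/-- The number of edges of `G` with both endpoints in `X`. -/
def edgesIn (G : SimpleGraph V) (X : Finset V) : ℕ :=
  Nat.card {e : Sym2 V // e ∈ G.edgeSet ∧ ∀ v ∈ e, v ∈ X}

/-- The number of edges of `G`. -/
def edgeCount (G : SimpleGraph V) : ℕ := Nat.card G.edgeSet

/-- The maximum average degree of `G`: the maximum over nonempty vertex subsets `X`
of `2 e(G[X]) / |X|`. -/
def mad [Fintype V] (G : SimpleGraph V) : ℝ :=
  ⨆ X : {X : Finset V // X.Nonempty}, (2 * edgesIn G X.1 : ℝ) / X.1.card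

/-- The degree of a vertex. -/
def deg (G : SimpleGraph V) (v : V) : ℕ := Nat.card (G.neighborSet v)

/-- The maximum degree `Δ(G)`. -/
def maxDeg [Fintype V] (G : SimpleGraph V) : ℕ := univ.sup (deg G)

/-- `G` is `d`-regular. -/
def IsReg (G : SimpleGraph V) (d : ℕ) : Prop := ∀ v, deg G v = d

/-- `G` admits an orientation with maximum outdegree at most one:
an assignment of a tail (source) vertex to each edge, no vertex being
the tail of two distinct edges. -/
def HasOrientationOutdegLEOne (G : SimpleGraph V) : Prop :=
  ∃ f : G.edgeSet → V, (∀ e : G.edgeSet, f e ∈ (e : Sym2 V)) ∧ Function.Injective f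

/-- Two lists (sequences) of the same length `r` are close if they contain a common
subsequence of length `r - 1`, obtained by deleting one entry from each. -/
def Close {S : Type*} (L M : List S) : Prop :=
  ∃ i < L.length, ∃ j < M.length, L.eraseIdx i = M.eraseIdx j

section Partitions

variable [Fintype V] [DecidableEq V]

/-- `Q` is obtained from `P` by merging the two distinct parts `A` and `B`. -/
def IsMergeStep (P Q : Finpartition (univ : Finset V)) : Prop :=
  ∃ A ∈ P.parts, ∃ B ∈ P.parts, A ≠ B ∧
    Q.parts = insert (A ∪ B) ((P.parts.erase A).erase B)

/-- Degree of the part `A` in the quotient graph `G / P`. -/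
def quotDeg (G : SimpleGraph V) (P : Finpartition (univ : Finset V)) (A : Finset V) : ℕ :=
  Nat.card {B : Finset V // B ∈ P.parts ∧ B ≠ A ∧ ∃ u ∈ A, ∃ v ∈ B, G.Adj u v}

/-- Red degree of the part `A` with respect to the partition `P`: the number of other
parts `B` which are neither fully adjacent nor fully non-adjacent to `A`. -/
def redDeg (G : SimpleGraph V) (P : Finpartition (univ : Finset V)) (A : Finset V) : ℕ :=
  Nat.card {B : Finset V // B ∈ P.parts ∧ B ≠ A ∧ (∃ u ∈ A, ∃ v ∈ B, G.Adj u v) ∧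
    ¬ (∀ u ∈ A, ∀ v ∈ B, G.Adj u v)}

/-- There is a sequence of partitions of `V(G)`, starting at the discrete partition,
ending with at most one part, each obtained from the previous one by merging two parts,
such that every part of every intermediate partition has `degFn`-degree at most `w`. -/
def SeqOK (G : SimpleGraph V)
    (degFn : SimpleGraph V → Finpartition (univ : Finset V) → Finset V → ℕ) (w : ℕ) : Prop :=
  ∃ n : ℕ, ∃ P : Fin (n + 1) → Finpartition (univ : Finset V),
    (∀ A ∈ (P 0).parts, A.card = 1) ∧
    (P (Fin.last n)).parts.card ≤ 1 ∧
    (∀ i : Fin n, IsMergeStep (P i.castSucc) (P i.succ)) ∧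
    (∀ i, ∀ A ∈ (P i).parts, degFn G (P i) A ≤ w)

/-- The sparse twin-width of `G`: the least `w` such that `G` can be contracted to a
single vertex by iterated pairwise identifications with all intermediate (quotient)
graphs of maximum degree at most `w`. -/
def stww (G : SimpleGraph V) : ℕ := sInf {w | SeqOK G quotDeg w}

/-- The twin-width of `G`, via contraction sequences minimizing the maximum red degree. -/
def tww (G : SimpleGraph V) : ℕ := sInf {w | SeqOK G redDeg w}

/-- The quotient graph `G / P`: parts of `P` are adjacent iff some edge of `G` joins them. -/
def quotGraph (G : SimpleGraph V) (P : Finpartition (univ : Finset V)) :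
    SimpleGraph {A : Finset V // A ∈ P.parts} :=
  SimpleGraph.fromRel (fun A B => ∃ u ∈ A.1, ∃ v ∈ B.1, G.Adj u v)

end Partitions

/-- A graph is `w`-degenerate if every nonempty (induced) subgraph has a vertex of
degree at most `w` in it. -/
def Degenerate {W : Type*} (w : ℕ) (H : SimpleGraph W) : Prop :=
  ∀ s : Finset W, s.Nonempty → ∃ a ∈ s, Nat.card {b : W // b ∈ s ∧ H.Adj a b} ≤ w

/-- The graph `Π(r₁,…,r_a; b, q)`: vertices are tuples `(v₁,…,v_a)` with `vᵢ ∈ [q]^{rᵢ}`,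
two tuples being adjacent iff (they are distinct and) at least `b` coordinates are
pairwise equal or close. -/
def PiGraph (a b q : ℕ) (rfn : Fin a → ℕ) : SimpleGraph (∀ i : Fin a, Fin (rfn i) → Fin q) :=
  SimpleGraph.fromRel (fun u v => ∃ I : Finset (Fin a), I.card = b ∧
    ∀ i ∈ I, u i = v i ∨ Close (List.ofFn (u i)) (List.ofFn (v i)))

/-!
A neighbour `v` of `u` in `Π` is close to `u` on some `b` coordinates (equal sequences of
positive length are close). There are at most `C(a, b) ≤ a ^ b` ways to choose these
coordinates, at most `r ^ 2 * q` sequences close to a given one on each of them, and at most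
`q ^ r` sequences on each of the remaining `a - b` coordinates; the product is the bound.
-/

lemma Close.symm {S : Type*} {L M : List S} (h : Close L M) : Close M L := by
  obtain ⟨i, hi, j, hj, hij⟩ := h
  exact ⟨j, hj, i, hi, hij.symm⟩

lemma close_ofFn_of_eq_or_close {α : Type*} {n : ℕ} (hn : 0 < n) {x y : Fin n → α}
    (h : x = y ∨ Close (List.ofFn x) (List.ofFn y)) : Close (List.ofFn x) (List.ofFn y) := by
  rcases h with rfl | hxy
  · exact ⟨0, by simpa, 0, by simpa, rfl⟩
  · exact hxy

/-- A sequence close to `u` is recovered from `u` by deleting the `i`-th entry and inserting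
some `x` at position `j`, which leaves at most `n * n * |α|` choices. -/
lemma ncard_close_le {α : Type*} [Fintype α] {n : ℕ} (u : Fin n → α) :
    {w : Fin n → α | Close (List.ofFn u) (List.ofFn w)}.ncard ≤ n ^ 2 * Fintype.card α := by
  classical
  set T : Finset (List α) := (range n ×ˢ range n ×ˢ univ).image
    fun p : ℕ × ℕ × α => ((List.ofFn u).eraseIdx p.1).insertIdx p.2.1 p.2.2
  have hT : #T ≤ n ^ 2 * Fintype.card α := by
    calc #T ≤ #(range n ×ˢ range n ×ˢ (univ : Finset α)) := card_image_le
      _ = n ^ 2 * Fintype.card α := by simp [sq, mul_assoc]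
  refine le_trans ?_ hT
  rw [← Set.ncard_coe_finset]
  refine Set.ncard_le_ncard_of_injOn List.ofFn (fun w hw => ?_) List.ofFn_injective.injOn
  obtain ⟨i, hi, j, hj, hij⟩ := hw
  simp only [List.length_ofFn] at hi hj
  refine mem_image.2 ⟨(i, j, w ⟨j, hj⟩), by simp [hi, hj], ?_⟩
  have hjw := List.insertIdx_eraseIdx_getElem (l := List.ofFn w) (n := j) (by simpa)
  rwa [List.getElem_ofFn, ← hij] at hjw

section Counting

variable {ι : Type*} [Fintype ι] [DecidableEq ι] {β : ι → Type*} [∀ i, Fintype (β i)]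

lemma card_piFinset_ite_le (I : Finset ι) (S : ∀ i, Finset (β i)) {s t : ℕ}
    (hS : ∀ i, #(S i) ≤ s) (hβ : ∀ i, Fintype.card (β i) ≤ t) :
    #(Fintype.piFinset fun i => if i ∈ I then S i else univ) ≤ s ^ #I * t ^ #Iᶜ := by
  rw [Fintype.card_piFinset]
  calc ∏ i, #(if i ∈ I then S i else univ) ≤ ∏ i, if i ∈ I then s else t := by
        refine prod_le_prod' fun i _ => ?_
        split_ifs
        · exact hS i
        · exact hβ i
    _ = s ^ #I * t ^ #Iᶜ := by
        rw [← prod_mul_prod_compl I, prod_congr rfl fun i hi => if_pos hi,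
          prod_congr rfl fun i hi => if_neg (mem_compl.1 hi), prod_const, prod_const]

lemma ncard_setOf_exists_forall_mem_le (S : ∀ i, Set (β i)) (b : ℕ) {s t : ℕ}
    (hS : ∀ i, (S i).ncard ≤ s) (hβ : ∀ i, Fintype.card (β i) ≤ t) :
    {v : ∀ i, β i | ∃ I : Finset ι, #I = b ∧ ∀ i ∈ I, v i ∈ S i}.ncard ≤
      (Fintype.card ι).choose b * s ^ b * t ^ (Fintype.card ι - b) := by
  classical
  let S' (i : ι) : Finset (β i) := (S i).toFinite.toFinset
  have hS' (i : ι) : #(S' i) ≤ s := (Set.ncard_eq_toFinset_card (S i)).symm.trans_le (hS i)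
  have hcover : {v : ∀ i, β i | ∃ I : Finset ι, #I = b ∧ ∀ i ∈ I, v i ∈ S i} ⊆
      ↑((powersetCard b univ).biUnion fun I =>
        Fintype.piFinset fun i => if i ∈ I then S' i else univ) := by
    rintro v ⟨I, hIb, hI⟩
    refine mem_biUnion.2 ⟨I, mem_powersetCard.2 ⟨subset_univ I, hIb⟩, ?_⟩
    refine Fintype.mem_piFinset.2 fun i => ?_
    split_ifs with hi
    · exact (S i).toFinite.mem_toFinset.2 (hI i hi)
    · exact mem_univ _
  calc _ ≤ _ := Set.ncard_le_ncard hcover (finite_toSet _)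
    _ ≤ ∑ I ∈ powersetCard b univ, #(Fintype.piFinset fun i => if i ∈ I then S' i else univ) := by
        rw [Set.ncard_coe_finset]
        exact card_biUnion_le
    _ ≤ ∑ _I ∈ powersetCard b (univ : Finset ι), s ^ b * t ^ (Fintype.card ι - b) := by
        refine sum_le_sum fun I hI => ?_
        obtain ⟨-, hIb⟩ := mem_powersetCard.1 hI
        simpa [card_compl, hIb] using card_piFinset_ite_le I S' hS' hβ
    _ = _ := by simp [mul_assoc]

end Counting

lemma exists_close_of_piGraph_adj {a b q : ℕ} {rfn : Fin a → ℕ} (hri : ∀ i, 0 < rfn i)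
    {u v : ∀ i, Fin (rfn i) → Fin q} (h : (PiGraph a b q rfn).Adj u v) :
    ∃ I : Finset (Fin a), #I = b ∧ ∀ i ∈ I, Close (List.ofFn (u i)) (List.ofFn (v i)) := by
  obtain ⟨-, ⟨I, hIb, hI⟩ | ⟨I, hIb, hI⟩⟩ := h
  · exact ⟨I, hIb, fun i hi => close_ofFn_of_eq_or_close (hri i) (hI i hi)⟩
  · exact ⟨I, hIb, fun i hi => (close_ofFn_of_eq_or_close (hri i) (hI i hi)).symm⟩

lemma choose_mul_pow_le (a b q r : ℕ) :
    a.choose b * (r ^ 2 * q) ^ b * (q ^ r) ^ (a - b) ≤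
      r ^ (2 * b) * a ^ b * q ^ (a * r - b * (r - 1)) := by
  rcases lt_or_ge a b with hab | hba
  · simp [Nat.choose_eq_zero_of_lt hab]
  rcases Nat.eq_zero_or_pos r with rfl | hr
  · rcases Nat.eq_zero_or_pos b with rfl | hb
    · simp
    · simp [hb.ne']
  have hexp : b + r * (a - b) = a * r - b * (r - 1) := by
    obtain ⟨c, rfl⟩ := Nat.exists_eq_add_of_le hba
    obtain ⟨s, rfl⟩ := Nat.exists_eq_add_of_le hr
    rw [Nat.add_sub_cancel_left, Nat.add_sub_cancel_left]
    apply Nat.eq_sub_of_add_eq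
    ring
  calc a.choose b * (r ^ 2 * q) ^ b * (q ^ r) ^ (a - b)
      = a.choose b * r ^ (2 * b) * q ^ (b + r * (a - b)) := by ring
    _ ≤ a ^ b * r ^ (2 * b) * q ^ (b + r * (a - b)) := by gcongr; exact Nat.choose_le_pow a b
    _ = _ := by rw [hexp]; ring

theorem statement_4_general (a b q r : ℕ) (rfn : Fin a → ℕ)
    (hq : 2 ≤ q)
    (hri : ∀ i, 0 < rfn i) (hrr : ∀ i, rfn i ≤ r) :
    maxDeg (PiGraph a b q rfn) ≤ r ^ (2 * b) * a ^ b * q ^ (a * r - b * (r - 1)) := by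
  refine Finset.sup_le fun u _ => ?_
  let closeTo (i : Fin a) : Set (Fin (rfn i) → Fin q) :=
    {w | Close (List.ofFn (u i)) (List.ofFn w)}
  have hclose (i : Fin a) : (closeTo i).ncard ≤ r ^ 2 * q :=
    (ncard_close_le (u i)).trans <| by
      simpa using Nat.mul_le_mul_right q (Nat.pow_le_pow_left (hrr i) 2)
  have hseq (i : Fin a) : Fintype.card (Fin (rfn i) → Fin q) ≤ q ^ r := by
    simpa using Nat.pow_le_pow_right (by omega) (hrr i)
  calc deg (PiGraph a b q rfn) u
      ≤ {v : ∀ i, Fin (rfn i) → Fin q |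
          ∃ I : Finset (Fin a), #I = b ∧ ∀ i ∈ I, v i ∈ closeTo i}.ncard := by
        rw [deg, Nat.card_coe_set_eq]
        exact Set.ncard_le_ncard (fun v huv => exists_close_of_piGraph_adj hri huv)
    _ ≤ a.choose b * (r ^ 2 * q) ^ b * (q ^ r) ^ (a - b) := by
        simpa using ncard_setOf_exists_forall_mem_le closeTo b hclose hseq
    _ ≤ _ := choose_mul_pow_le a b q r

theorem statement_4 (a b q r : ℕ) (rfn : Fin a → ℕ)
    (hq : 2 ≤ q) (hb : 0 < b) (hba : b ≤ a) (hr0 : 0 < r)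
    (hri : ∀ i, 0 < rfn i) (hrr : ∀ i, rfn i ≤ r) :
    maxDeg (PiGraph a b q rfn) ≤ r ^ (2 * b) * a ^ b * q ^ (a * r - b * (r - 1)) :=
  statement_4_general a b q r rfn hq hri hrr

end TwwPaper
end
end

section
/- Let G be a graph and let K < v(G) be a positive integer. Then there exists a partition 𝒫 of V(G) with |𝒫| ≤ K, such that every part of 𝒫 has at most 2·v(G)/K vertices, and the quotient graph G/𝒫 is stww(G)-degenerate. -/
noncomputable section

namespace TwwPaper

open Finset

variable {V : Type*}

/-!
Let `n = |V|`. Run a contraction sequence witnessing `stww G` and freeze vertices along the way: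
whenever the part created by a merge has more than `n / K` unfrozen vertices, these become a new
class and are frozen. Then every part of every intermediate partition has at most `n / K`
unfrozen vertices, so each class, made of the unfrozen vertices of two merged parts, has between
`n / K` and `2n / K` vertices; there are fewer than `K` of them, plus one leftover class of
vertices never frozen, of size at most `n / K`. Order the classes by freezing time. When a class
`C` is frozen inside the new part `M`, every vertex of a later class lies in a part of the current
partition other than `M` whose unfrozen vertices all end up in that same later class. So the
later neighbours of `C` inject into the neighbours of `M` in the current quotient graph, of which
there are at most `stww G`.
-/

theorem degenerate_of_forall_card_adj_lt_le {W : Type*} [Finite W] {H : SimpleGraph W} {w : ℕ}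
    (ρ : W → ℕ) (hρ : ∀ a b, H.Adj a b → ρ a ≠ ρ b)
    (h : ∀ a, Nat.card {b // H.Adj a b ∧ ρ a < ρ b} ≤ w) : Degenerate w H := by
  intro s hs
  obtain ⟨a, ha, hmin⟩ := s.exists_min_image ρ hs
  refine ⟨a, ha, le_trans (Nat.card_le_card_of_injective
    (fun b => ⟨b.1, b.2.2, (hmin b.1 b.2.1).lt_of_ne (hρ a b.1 b.2.2)⟩) ?_) (h a)⟩
  intro b₁ b₂ hb
  exact Subtype.ext (congrArg Subtype.val hb :)

section MergeParts

variable [DecidableEq V] {s : Finset V}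

def mergeParts (P : Finpartition s) {A B : Finset V} (hA : A ∈ P.parts)
    (hB : B ∈ P.parts) : Finpartition s where
  parts := insert (A ∪ B) ((P.parts.erase A).erase B)
  supIndep := by
    rw [Finset.supIndep_iff_pairwiseDisjoint, coe_insert]
    refine (P.disjoint.subset fun C hC => ?_).insert fun C hC _ => ?_
    · exact mem_of_mem_erase (mem_of_mem_erase hC)
    · obtain ⟨⟨hC, hCA⟩, hCB⟩ : (C ∈ P.parts ∧ C ≠ A) ∧ C ≠ B := by simpa using hC
      exact disjoint_union_left.2 ⟨P.disjoint hA hC (Ne.symm hCA), P.disjoint hB hC (Ne.symm hCB)⟩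
  sup_parts := by
    refine Eq.trans ?_ P.sup_parts
    ext x
    simp only [mem_sup, mem_insert, mem_erase, id]
    grind
  bot_notMem := by
    simp only [bot_eq_empty, mem_insert, mem_erase, not_or]
    exact ⟨fun h => P.ne_bot hA (union_eq_empty.1 h.symm).1, fun h => P.bot_notMem h.2.2⟩

theorem card_mergeParts_lt (P : Finpartition s) {A B : Finset V}
    (hA : A ∈ P.parts) (hB : B ∈ P.parts) (hAB : A ≠ B) :
    #(mergeParts P hA hB).parts < #P.parts := by
  have hB' : B ∈ P.parts.erase A := mem_erase.2 ⟨hAB.symm, hB⟩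
  calc #(mergeParts P hA hB).parts ≤ #((P.parts.erase A).erase B) + 1 := card_insert_le _ _
    _ = #(P.parts.erase A) := card_erase_add_one hB'
    _ < #P.parts := card_erase_lt_of_mem hA

theorem card_parts_le_of_lt_mul_card (P : Finpartition s) {K : ℕ}
    (hK : 0 < K) (L : Finset V) (h : ∀ C ∈ P.parts, C ≠ L → #s < K * #C) : #P.parts ≤ K := by
  have hsum : #(P.parts.erase L) * (#s + 1) ≤ K * #s :=
    calc #(P.parts.erase L) * (#s + 1) = ∑ _C ∈ P.parts.erase L, (#s + 1) := by
          rw [sum_const, smul_eq_mul]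
      _ ≤ ∑ C ∈ P.parts.erase L, K * #C :=
          sum_le_sum fun C hC => h C (mem_of_mem_erase hC) (ne_of_mem_erase hC)
      _ ≤ ∑ C ∈ P.parts, K * #C := sum_le_sum_of_subset (erase_subset L P.parts)
      _ = K * #s := by rw [← mul_sum, P.sum_card_parts]
  have hlt : #(P.parts.erase L) < K :=
    Nat.lt_of_mul_lt_mul_right (hsum.trans_lt (Nat.mul_lt_mul_of_pos_left (Nat.lt_succ_self _) hK))
  have := pred_card_le_card_erase (s := P.parts) (a := L)
  omega

end MergeParts

instance instDecidableRelKer {α β : Type*} [DecidableEq β] (f : α → β) :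
    DecidableRel (Setoid.ker f) :=
  fun _ _ => decidable_of_iff _ Setoid.ker_def.symm

section Fibres

variable [Fintype V] [DecidableEq V] {β : Type*} [DecidableEq β]

def fibres (f : V → β) : Finpartition (univ : Finset V) := Finpartition.ofSetoid (Setoid.ker f)

variable {f : V → β} {A B : Finset V} {x y : V}

theorem mem_iff_apply_eq_of_mem_fibres (hA : A ∈ (fibres f).parts) (hx : x ∈ A) :
    y ∈ A ↔ f y = f x := by
  rw [← (fibres f).part_eq_of_mem hA hx, fibres, Finpartition.mem_part_ofSetoid_iff_rel,
    Setoid.ker_def, eq_comm]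

theorem eq_of_mem_fibres (hA : A ∈ (fibres f).parts) (hB : B ∈ (fibres f).parts)
    (hx : x ∈ A) (hy : y ∈ B) (h : f x = f y) : A = B := by
  ext z
  rw [mem_iff_apply_eq_of_mem_fibres hA hx, mem_iff_apply_eq_of_mem_fibres hB hy, h]

end Fibres

def extendByLast {α : Type*} {n : ℕ} (P : Fin (n + 1) → α) (k : ℕ) : α :=
  P ⟨min k n, Nat.lt_succ_of_le (min_le_right k n)⟩

theorem extendByLast_zero {α : Type*} {n : ℕ} (P : Fin (n + 1) → α) : extendByLast P 0 = P 0 :=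
  congrArg P (Fin.ext (Nat.zero_min n))

theorem extendByLast_self {α : Type*} {n : ℕ} (P : Fin (n + 1) → α) :
    extendByLast P n = P (Fin.last n) :=
  congrArg P (Fin.ext (min_self n))

section Partitions

variable [Fintype V] [DecidableEq V]

theorem quotDeg_le_card_parts (G : SimpleGraph V) (P : Finpartition (univ : Finset V))
    (A : Finset V) : quotDeg G P A ≤ #P.parts := by
  rw [quotDeg, ← Nat.card_eq_finsetCard]
  exact Nat.card_le_card_of_injective (fun B => ⟨B.1, B.2.1⟩)
    fun B₁ B₂ h => Subtype.ext (congrArg Subtype.val h :)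

theorem exists_mergeSteps_to_card_le_one (P : Finpartition (univ : Finset V)) :
    ∃ n, ∃ Ps : Fin (n + 1) → Finpartition (univ : Finset V), Ps 0 = P ∧
      #(Ps (Fin.last n)).parts ≤ 1 ∧ ∀ i : Fin n, IsMergeStep (Ps i.castSucc) (Ps i.succ) := by
  by_cases hP : #P.parts ≤ 1
  · exact ⟨0, fun _ => P, rfl, hP, fun i => i.elim0⟩
  obtain ⟨A, hA, B, hB, hAB⟩ := one_lt_card.1 (not_le.1 hP)
  obtain ⟨n, Ps, h0, hlast, hsteps⟩ := exists_mergeSteps_to_card_le_one (mergeParts P hA hB)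
  refine ⟨n + 1, Fin.cons P Ps, rfl, by simpa [← Fin.succ_last] using hlast, ?_⟩
  refine Fin.cases ⟨A, hA, B, hB, hAB, by simp [h0, mergeParts]⟩ fun i => ?_
  simpa [← Fin.succ_castSucc] using hsteps i
termination_by #P.parts
decreasing_by exact card_mergeParts_lt P hA hB hAB

theorem seqOK_quotDeg_card (G : SimpleGraph V) : SeqOK G quotDeg (Fintype.card V) := by
  obtain ⟨n, Ps, h0, hlast, hsteps⟩ :=
    exists_mergeSteps_to_card_le_one (⊥ : Finpartition (univ : Finset V))
  refine ⟨n, Ps, fun A hA => ?_, hlast, hsteps, fun i A _ => ?_⟩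
  · obtain ⟨x, -, rfl⟩ := Finpartition.mem_bot_iff.1 (h0 ▸ hA)
    exact card_singleton x
  · exact (quotDeg_le_card_parts G _ A).trans (Ps i).card_parts_le_card

theorem seqOK_stww (G : SimpleGraph V) : SeqOK G quotDeg (stww G) :=
  Nat.sInf_mem (s := {w | SeqOK G quotDeg w}) ⟨_, seqOK_quotDeg_card G⟩

theorem exists_adj_of_quotGraph_adj {G : SimpleGraph V}
    {Q : Finpartition (univ : Finset V)} {a b : {A // A ∈ Q.parts}}
    (h : (quotGraph G Q).Adj a b) : ∃ u ∈ a.1, ∃ v ∈ b.1, G.Adj u v := by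
  rw [quotGraph, SimpleGraph.fromRel_adj] at h
  rcases h.2 with h | ⟨v, hv, u, hu, huv⟩
  exacts [h, ⟨u, hu, v, hv, huv.symm⟩]

theorem card_adj_le_quotDeg (G : SimpleGraph V)
    {Q R : Finpartition (univ : Finset V)} (a : {A // A ∈ Q.parts}) {M : Finset V}
    (haM : a.1 ⊆ M) (p : {A // A ∈ Q.parts} → Prop) (hpM : ∀ b, p b → ∀ v ∈ b.1, v ∉ M)
    (hpR : ∀ b₁ b₂, p b₁ → p b₂ → ∀ v₁ ∈ b₁.1, ∀ v₂ ∈ b₂.1, R.part v₁ = R.part v₂ → b₁ = b₂) :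
    Nat.card {b // (quotGraph G Q).Adj a b ∧ p b} ≤ quotDeg G R M := by
  -- `b` is sent to the part of `R` containing the far end of an edge from `a` to `b`.
  have hedge : ∀ b : {b // (quotGraph G Q).Adj a b ∧ p b}, ∃ v ∈ b.1.1, ∃ u ∈ a.1, G.Adj u v :=
    fun b => by
      obtain ⟨u, hu, v, hv, huv⟩ := exists_adj_of_quotGraph_adj b.2.1
      exact ⟨v, hv, u, hu, huv⟩
  choose v hv u hu huv using hedge
  refine Nat.card_le_card_of_injective (fun b => ⟨R.part (v b), R.part_mem.2 (mem_univ _),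
    fun h => hpM b.1 b.2.2 (v b) (hv b) (h ▸ R.mem_part (mem_univ _)),
    u b, haM (hu b), v b, R.mem_part (mem_univ _), huv b⟩) fun b₁ b₂ h => ?_
  exact Subtype.ext (hpR _ _ b₁.2.2 b₂.2.2 _ (hv b₁) _ (hv b₂) (congrArg Subtype.val h :))

theorem degenerate_quotGraph_fibres (G : SimpleGraph V) {f : V → ℕ} {w : ℕ}
    (h : ∀ a : {A // A ∈ (fibres f).parts}, ∀ x ∈ a.1,
      Nat.card {b // (quotGraph G (fibres f)).Adj a b ∧ ∀ y ∈ b.1, f x < f y} ≤ w) :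
    Degenerate w (quotGraph G (fibres f)) := by
  have hrep (a : {A // A ∈ (fibres f).parts}) := ((fibres f).nonempty_of_mem_parts a.2).choose_spec
  set ρ : {A // A ∈ (fibres f).parts} → ℕ :=
    fun a => f ((fibres f).nonempty_of_mem_parts a.2).choose
  have hρ (a : {A // A ∈ (fibres f).parts}) (x : V) (hx : x ∈ a.1) : f x = ρ a :=
    (mem_iff_apply_eq_of_mem_fibres a.2 (hrep a)).1 hx
  refine degenerate_of_forall_card_adj_lt_le ρ (fun a b hab hρab => hab.ne
    (Subtype.ext (eq_of_mem_fibres a.2 b.2 (hrep a) (hrep b) hρab))) fun a => ?_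
  refine le_of_eq_of_le (Nat.card_congr (Equiv.subtypeEquivRight fun b => and_congr_right
    fun _ => ⟨fun hab y hy => hρ b y hy ▸ hab, fun hab => hab _ (hrep b)⟩)) (h a _ (hrep a))

end Partitions

section Freezing

variable [Fintype V] [DecidableEq V]

-- The two parts may coincide, so that a finite sequence of merges can be continued by idle steps.
def Merges (P Q : Finpartition (univ : Finset V)) (M : Finset V) : Prop :=
  ∃ A ∈ P.parts, ∃ B ∈ P.parts, M = A ∪ B ∧ Q.parts = insert M ((P.parts.erase A).erase B)

namespace Merges

variable {P Q : Finpartition (univ : Finset V)} {M : Finset V}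

theorem mem_parts (h : Merges P Q M) : M ∈ Q.parts := by
  obtain ⟨A, -, B, -, -, hQ⟩ := h
  exact hQ ▸ mem_insert_self M _

theorem eq_or_mem_parts (h : Merges P Q M) {C : Finset V} (hC : C ∈ Q.parts) :
    C = M ∨ C ∈ P.parts := by
  obtain ⟨A, -, B, -, -, hQ⟩ := h
  rw [hQ, mem_insert] at hC
  exact hC.imp_right fun hC => mem_of_mem_erase (mem_of_mem_erase hC)

theorem subset_or_mem_parts (h : Merges P Q M) {C : Finset V} (hC : C ∈ P.parts) :
    C ⊆ M ∨ C ∈ Q.parts := by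
  obtain ⟨A, -, B, -, rfl, hQ⟩ := h
  by_cases hCA : C = A
  · exact Or.inl (hCA ▸ subset_union_left)
  by_cases hCB : C = B
  · exact Or.inl (hCB ▸ subset_union_right)
  exact Or.inr (hQ ▸ mem_insert_of_mem (mem_erase.2 ⟨hCB, mem_erase.2 ⟨hCA, hC⟩⟩))

theorem part_subset_part (h : Merges P Q M) (x : V) : P.part x ⊆ Q.part x := by
  have hx := P.mem_part (mem_univ x)
  rcases h.subset_or_mem_parts (P.part_mem.2 (mem_univ x)) with hM | hQ
  · rw [Q.part_eq_of_mem h.mem_parts (hM hx)]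
    exact hM
  · rw [Q.part_eq_of_mem hQ hx]

theorem card_sdiff_le (h : Merges P Q M) (U : Finset V) :
    ∃ A ∈ P.parts, ∃ B ∈ P.parts, #(M \ U) ≤ #(A \ U) + #(B \ U) := by
  obtain ⟨A, hA, B, hB, rfl, -⟩ := h
  exact ⟨A, hA, B, hB, union_sdiff_distrib A B U ▸ card_union_le _ _⟩

end Merges

theorem merges_self {P : Finpartition (univ : Finset V)} {A : Finset V} (hA : A ∈ P.parts) :
    Merges P P A :=
  ⟨A, hA, A, hA, (union_self A).symm, by rw [erase_idem, insert_erase hA]⟩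

theorem merges_extendByLast [Nonempty V] {n : ℕ}
    {P : Fin (n + 1) → Finpartition (univ : Finset V)}
    (h : ∀ i : Fin n, IsMergeStep (P i.castSucc) (P i.succ)) (k : ℕ) :
    ∃ M, Merges (extendByLast P k) (extendByLast P (k + 1)) M := by
  rcases Nat.lt_or_ge k n with hk | hk
  · obtain ⟨A, hA, B, hB, -, hQ⟩ := h ⟨k, hk⟩
    have e₀ : extendByLast P k = P (Fin.castSucc ⟨k, hk⟩) :=
      congrArg P (Fin.ext (min_eq_left hk.le))
    have e₁ : extendByLast P (k + 1) = P (Fin.succ ⟨k, hk⟩) :=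
      congrArg P (Fin.ext (min_eq_left hk))
    exact ⟨A ∪ B, e₀ ▸ e₁ ▸ ⟨A, hA, B, hB, rfl, hQ⟩⟩
  · have e : extendByLast P (k + 1) = extendByLast P k :=
      congrArg P (Fin.ext (by simp only [min_eq_right hk, min_eq_right (hk.trans k.le_succ)]))
    obtain ⟨x⟩ := ‹Nonempty V›
    rw [e]
    exact ⟨_, merges_self ((extendByLast P k).part_mem.2 (mem_univ x))⟩

variable (K : ℕ) (N : ℕ → Finset V)

def frozen : ℕ → Finset V
  | 0 => ∅
  | k + 1 => if Fintype.card V < K * #(N k \ frozen k) then frozen k ∪ N k else frozen k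

-- Vertices still unfrozen at time `T` form the last class, with freeze time `T + 1`.
def freezeTime (T : ℕ) (x : V) : ℕ :=
  Nat.find (⟨T + 1, Or.inr rfl⟩ : ∃ k, x ∈ frozen K N k ∨ k = T + 1)

variable {K N}

theorem mem_frozen_succ {k : ℕ} {x : V} :
    x ∈ frozen K N (k + 1) ↔
      x ∈ frozen K N k ∨ (Fintype.card V < K * #(N k \ frozen K N k) ∧ x ∈ N k) := by
  rw [frozen]
  split_ifs with h <;> simp [h]

theorem frozen_mono : Monotone (frozen K N) :=
  monotone_nat_of_le_succ fun _ _ hx => mem_frozen_succ.2 (Or.inl hx)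

theorem freezeTime_le_iff {T k : ℕ} (hk : k ≤ T) {x : V} :
    freezeTime K N T x ≤ k ↔ x ∈ frozen K N k := by
  rw [freezeTime, Nat.find_le_iff]
  constructor
  · rintro ⟨j, hj, hx | rfl⟩
    exacts [frozen_mono hj hx, absurd hj (by omega)]
  · exact fun hx => ⟨k, le_rfl, Or.inl hx⟩

theorem freezeTime_le_succ (T : ℕ) (x : V) : freezeTime K N T x ≤ T + 1 :=
  Nat.find_min' _ (Or.inr rfl)

theorem exists_freezeTime_eq_succ (T : ℕ) (x : V) : ∃ m, freezeTime K N T x = m + 1 := by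
  refine Nat.exists_eq_add_one.2 (Nat.pos_of_ne_zero fun h => ?_)
  have := (freezeTime_le_iff (Nat.zero_le T)).1 h.le
  simp [frozen] at this

theorem freezeTime_congr {T : ℕ} {x y : V} (h : ∀ k, x ∈ frozen K N k ↔ y ∈ frozen K N k) :
    freezeTime K N T x = freezeTime K N T y :=
  Nat.find_congr' (by simp [h])

theorem freezeTime_eq_succ_iff {T m : ℕ} (hm : m + 1 ≤ T) {x : V} :
    freezeTime K N T x = m + 1 ↔ x ∈ frozen K N (m + 1) ∧ x ∉ frozen K N m := by
  rw [← freezeTime_le_iff hm, ← freezeTime_le_iff (by omega : m ≤ T)]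
  omega

section MergeSequence

variable {P : ℕ → Finpartition (univ : Finset V)} (hN : ∀ k, Merges (P k) (P (k + 1)) (N k))
include hN

theorem part_mono (x : V) : Monotone fun k => (P k).part x :=
  monotone_nat_of_le_succ fun k => (hN k).part_subset_part x

theorem mul_card_sdiff_frozen_le (h0 : ∀ A ∈ (P 0).parts, #A = 1)
    (hKn : K ≤ Fintype.card V) (k : ℕ) :
    ∀ C ∈ (P k).parts, K * #(C \ frozen K N k) ≤ Fintype.card V := by
  induction k with
  | zero =>
    intro C hC
    simpa [frozen, h0 C hC] using hKn
  | succ k ih =>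
    intro C hC
    rcases (hN k).eq_or_mem_parts hC with rfl | hC
    · by_cases hfreeze : Fintype.card V < K * #(N k \ frozen K N k)
      · simp [frozen, hfreeze, sdiff_eq_empty_iff_subset.2 subset_union_right]
      · rw [frozen, if_neg hfreeze]
        exact not_lt.1 hfreeze
    · exact (Nat.mul_le_mul_left K (card_le_card
        (sdiff_subset_sdiff subset_rfl (frozen_mono k.le_succ)))).trans (ih C hC)

theorem mem_frozen_iff_of_mem_part {t : ℕ} {x y : V} (hy : y ∈ (P t).part x)
    (hxy : x ∈ frozen K N t ↔ y ∈ frozen K N t) {j : ℕ} (hj : t ≤ j) :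
    x ∈ frozen K N j ↔ y ∈ frozen K N j := by
  induction j, hj using Nat.le_induction with
  | base => exact hxy
  | succ j hj ih =>
    have hpart : (P (j + 1)).part y = (P (j + 1)).part x :=
      (P (j + 1)).part_eq_of_mem ((P (j + 1)).part_mem.2 (mem_univ x))
        (part_mono hN x (by omega : t ≤ j + 1) hy)
    have hN' : x ∈ N j ↔ y ∈ N j := by
      rw [← (P (j + 1)).part_eq_iff_mem (hN j).mem_parts,
        ← (P (j + 1)).part_eq_iff_mem (hN j).mem_parts, hpart]
    rw [mem_frozen_succ, mem_frozen_succ, ih, hN']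

theorem freezeTime_eq_of_mem_part {T t : ℕ} {x y : V} (hy : y ∈ (P t).part x)
    (hx : x ∉ frozen K N t) (hy' : y ∉ frozen K N t) :
    freezeTime K N T x = freezeTime K N T y := by
  refine freezeTime_congr fun k => ?_
  rcases le_total t k with htk | hkt
  · exact mem_frozen_iff_of_mem_part hN hy (iff_of_false hx hy') htk
  · exact iff_of_false (fun h => hx (frozen_mono hkt h)) fun h => hy' (frozen_mono hkt h)

end MergeSequence

end Freezing

section FreezingPartition

variable [Fintype V] [DecidableEq V] {K : ℕ} {N : ℕ → Finset V} {T : ℕ}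

theorem lt_mul_card_sdiff_frozen_of_freezeTime_eq {m : ℕ} (hm : m + 1 ≤ T) {x : V}
    (hx : freezeTime K N T x = m + 1) : Fintype.card V < K * #(N m \ frozen K N m) := by
  have hx' := (freezeTime_eq_succ_iff hm).1 hx
  rw [mem_frozen_succ] at hx'
  exact (hx'.1.resolve_left hx'.2).1

theorem freezeTime_eq_succ_iff_mem_sdiff {m : ℕ} (hm : m + 1 ≤ T) {x : V}
    (hx : freezeTime K N T x = m + 1) (y : V) :
    freezeTime K N T y = m + 1 ↔ y ∈ N m \ frozen K N m := by
  have hfreeze := lt_mul_card_sdiff_frozen_of_freezeTime_eq hm hx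
  rw [freezeTime_eq_succ_iff hm, mem_frozen_succ, mem_sdiff]
  tauto

theorem card_parts_fibres_freezeTime_le (hK : 0 < K) :
    #(fibres (freezeTime K N T)).parts ≤ K := by
  refine card_parts_le_of_lt_mul_card _ hK {y | freezeTime K N T y = T + 1} fun C hC hCL => ?_
  obtain ⟨x, hx⟩ := (fibres _).nonempty_of_mem_parts hC
  obtain ⟨m, hm⟩ := exists_freezeTime_eq_succ (K := K) (N := N) T x
  have hmT : m + 1 ≤ T := by
    have hne : m + 1 ≠ T + 1 := fun h => hCL <| by
      ext y
      rw [mem_iff_apply_eq_of_mem_fibres hC hx, hm, h, mem_filter_univ]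
    have := hm ▸ freezeTime_le_succ (K := K) (N := N) T x
    omega
  have hC' : C = N m \ frozen K N m := by
    ext y
    rw [mem_iff_apply_eq_of_mem_fibres hC hx, hm, freezeTime_eq_succ_iff_mem_sdiff hmT hm]
  rw [hC', card_univ]
  exact lt_mul_card_sdiff_frozen_of_freezeTime_eq hmT hm

variable {P : ℕ → Finpartition (univ : Finset V)} (hN : ∀ k, Merges (P k) (P (k + 1)) (N k))
include hN

theorem mul_card_le_of_mem_fibres_freezeTime (h0 : ∀ A ∈ (P 0).parts, #A = 1)
    (hKn : K ≤ Fintype.card V) (hT : #(P T).parts ≤ 1) {A : Finset V}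
    (hA : A ∈ (fibres (freezeTime K N T)).parts) : K * #A ≤ 2 * Fintype.card V := by
  have hactive := mul_card_sdiff_frozen_le hN h0 hKn
  obtain ⟨x, hx⟩ := (fibres _).nonempty_of_mem_parts hA
  obtain ⟨m, hm⟩ := exists_freezeTime_eq_succ (K := K) (N := N) T x
  rcases Nat.lt_or_ge m T with hmT | hmT
  · have hA' : A = N m \ frozen K N m := by
      ext y
      rw [mem_iff_apply_eq_of_mem_fibres hA hx, hm, freezeTime_eq_succ_iff_mem_sdiff hmT hm]
    obtain ⟨B, hB, C, hC, hcard⟩ := (hN m).card_sdiff_le (frozen K N m)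
    rw [hA', two_mul]
    exact (Nat.mul_le_mul_left K hcard).trans
      ((Nat.mul_add K _ _).trans_le (Nat.add_le_add (hactive m B hB) (hactive m C hC)))
  · have hsub : A ⊆ (P T).part x \ frozen K N T := fun y hy => by
      have hy' := (mem_iff_apply_eq_of_mem_fibres hA hx).1 hy
      refine mem_sdiff.2 ⟨?_, fun hyT => ?_⟩
      · rw [← card_le_one.1 hT _ ((P T).part_mem.2 (mem_univ y)) _ ((P T).part_mem.2 (mem_univ x))]
        exact (P T).mem_part (mem_univ y)
      · have := (freezeTime_le_iff le_rfl).2 hyT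
        omega
    exact (Nat.mul_le_mul_left K (card_le_card hsub)).trans
      ((hactive T _ ((P T).part_mem.2 (mem_univ x))).trans (Nat.le_mul_of_pos_left _ two_pos))

theorem degenerate_quotGraph_fibres_freezeTime (G : SimpleGraph V) {w : ℕ}
    (hdeg : ∀ k, quotDeg G (P (k + 1)) (N k) ≤ w) :
    Degenerate w (quotGraph G (fibres (freezeTime K N T))) := by
  refine degenerate_quotGraph_fibres G fun a x hx => ?_
  obtain ⟨m, hm⟩ := exists_freezeTime_eq_succ (K := K) (N := N) T x
  rw [hm]
  rcases Nat.lt_or_ge m T with hmT | hmT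
  · have hfreeze := lt_mul_card_sdiff_frozen_of_freezeTime_eq hmT hm
    have haN : a.1 ⊆ N m := fun y hy => (mem_sdiff.1 ((freezeTime_eq_succ_iff_mem_sdiff hmT hm y).1
      ((mem_iff_apply_eq_of_mem_fibres a.2 hx).1 hy ▸ hm))).1
    have hlater {v : V} (hv : m + 1 < freezeTime K N T v) : v ∉ frozen K N (m + 1) := fun hvf => by
      have := (freezeTime_le_iff hmT).2 hvf
      omega
    refine (card_adj_le_quotDeg G a haN _
      (fun b hb v hv hvN => hlater (hb v hv) (mem_frozen_succ.2 (Or.inr ⟨hfreeze, hvN⟩)))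
      fun b₁ b₂ hb₁ hb₂ v₁ hv₁ v₂ hv₂ h => Subtype.ext (eq_of_mem_fibres b₁.2 b₂.2 hv₁ hv₂ ?_)
      ).trans (hdeg m)
    exact freezeTime_eq_of_mem_part hN (h ▸ (P (m + 1)).mem_part (mem_univ v₂))
      (hlater (hb₁ v₁ hv₁)) (hlater (hb₂ v₂ hv₂))
  · have : IsEmpty {b // (quotGraph G _).Adj a b ∧ ∀ y ∈ b.1, m + 1 < freezeTime K N T y} :=
      ⟨fun b => by
        obtain ⟨y, hy⟩ := (fibres _).nonempty_of_mem_parts b.1.2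
        have := b.2.2 y hy
        have := freezeTime_le_succ (K := K) (N := N) T y
        omega⟩
    rw [Nat.card_of_isEmpty]
    exact Nat.zero_le w

end FreezingPartition

theorem statement_8 {V : Type*} [Fintype V] [DecidableEq V] (G : SimpleGraph V) (K : ℕ)
    (hK0 : 0 < K) (hK : K < Fintype.card V) :
    ∃ P : Finpartition (Finset.univ : Finset V),
      P.parts.card ≤ K ∧
      (∀ A ∈ P.parts, (A.card : ℝ) ≤ 2 * (Fintype.card V : ℝ) / K) ∧
      Degenerate (stww G) (quotGraph G P) := by
  obtain ⟨n, P, h0, hlast, hsteps, hdeg⟩ := seqOK_stww G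
  have : Nonempty V := Fintype.card_pos_iff.1 (by omega)
  choose N hN using merges_extendByLast hsteps
  refine ⟨fibres (freezeTime K N n), card_parts_fibres_freezeTime_le hK0, fun A hA => ?_,
    degenerate_quotGraph_fibres_freezeTime hN G fun k => hdeg _ _ (hN k).mem_parts⟩
  have := mul_card_le_of_mem_fibres_freezeTime hN ((extendByLast_zero P).symm ▸ h0) hK.le
    ((extendByLast_self P).symm ▸ hlast) hA
  rw [le_div_iff₀ (by exact_mod_cast hK0)]
  exact_mod_cast (mul_comm K #A) ▸ this

end TwwPaper
end
end

section
/- Fix α > 0 and let n ≤ m ≤ (1/11)·n·log n. If G is a uniformly random graph with vertex set [n] and m edges, then with probability tending to 1 as n → ∞, every set X ⊆ [n] with |X| ≥ αn + 1 satisfies e(G[X]) ≤ (1/10)·|X|·log|X|. -/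
noncomputable section

/-!
Union bound over the sets `X`. Fix `X` with `s = |X|` and let `t = ⌊s log s / 10⌋ + 1`. Double
counting the pairs `(G, J)` with `J` a set of `j` edges of `G` inside `X` shows that a graph with
`m` edges has `t` edges inside `X` for at most a fraction
`(C(s + 1, 2) m / ((t + 1 - j) C(n, 2)))^j` of all choices. With `j ≈ t / 10` instead of `j = t`
the usual factor `e` disappears, and since `s log s < 10 t ≤ 10 m ≤ (10/11) n log n` the set `X`
cannot be almost all of `[n]`, so the base is at most `24/25`. As `j ≥ α n log (α n) / 100`, the
`2^n` choices of `X` contribute `2^n e^{-α n log (α n) / 2500} → 0`.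
-/

namespace Nat

theorem choose_mul_sub_pow_le (M t j : ℕ) :
    M.choose j * (t + 1 - j) ^ j ≤ M ^ j * t.choose j := by
  have hM := (M.descFactorial_eq_factorial_mul_choose j).symm.trans_le (M.descFactorial_le_pow j)
  have ht := (t.pow_sub_le_descFactorial j).trans_eq (t.descFactorial_eq_factorial_mul_choose j)
  refine Nat.le_of_mul_le_mul_left ?_ j.factorial_pos
  calc j ! * (M.choose j * (t + 1 - j) ^ j) = (j ! * M.choose j) * (t + 1 - j) ^ j := by ring
    _ ≤ M ^ j * (j ! * t.choose j) := Nat.mul_le_mul hM ht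
    _ = j ! * (M ^ j * t.choose j) := by ring

theorem descFactorial_mul_pow_le {m N : ℕ} (hmN : m ≤ N) (j : ℕ) :
    m.descFactorial j * N ^ j ≤ N.descFactorial j * m ^ j := by
  induction j with
  | zero => simp
  | succ j ih =>
    have hstep : (m - j) * N ≤ (N - j) * m := by
      rw [Nat.sub_mul, Nat.sub_mul, mul_comm m N]
      exact Nat.sub_le_sub_left (Nat.mul_le_mul_left j hmN) _
    calc m.descFactorial (j + 1) * N ^ (j + 1)
        = ((m - j) * N) * (m.descFactorial j * N ^ j) := by
          rw [descFactorial_succ]; ring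
      _ ≤ ((N - j) * m) * (N.descFactorial j * m ^ j) := Nat.mul_le_mul hstep ih
      _ = N.descFactorial (j + 1) * m ^ (j + 1) := by rw [descFactorial_succ]; ring

theorem choose_sub_mul_pow_le {N m j : ℕ} (hjm : j ≤ m) (hmN : m ≤ N) :
    (N - j).choose (m - j) * N ^ j ≤ m ^ j * N.choose m := by
  have hdesc : m.choose j * N ^ j ≤ N.choose j * m ^ j := by
    have := descFactorial_mul_pow_le hmN j
    rw [descFactorial_eq_factorial_mul_choose, descFactorial_eq_factorial_mul_choose,
      mul_assoc, mul_assoc] at this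
    exact Nat.le_of_mul_le_mul_left this j.factorial_pos
  refine Nat.le_of_mul_le_mul_left ?_ (Nat.choose_pos (hjm.trans hmN))
  calc N.choose j * ((N - j).choose (m - j) * N ^ j)
      = N.choose m * (m.choose j * N ^ j) := by rw [← mul_assoc, ← choose_mul hjm]; ring
    _ ≤ N.choose m * (N.choose j * m ^ j) := Nat.mul_le_mul_left _ hdesc
    _ = N.choose j * (m ^ j * N.choose m) := by ring

end Nat

namespace Finset

variable {α : Type*} [DecidableEq α]

theorem card_filter_powersetCard_superset_le (U J : Finset α) (m : ℕ) :
    #{A ∈ U.powersetCard m | J ⊆ A} ≤ (#U - #J).choose (m - #J) := by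
  by_cases hJU : J ⊆ U
  · rw [← card_sdiff_of_subset hJU, ← card_powersetCard]
    refine card_le_card_of_injOn (· \ J) (fun A hA => ?_) (fun A hA B hB h => ?_)
    · simp only [coe_filter, mem_powersetCard, Set.mem_ofPred_eq] at hA
      rw [mem_coe, mem_powersetCard]
      exact ⟨sdiff_subset_sdiff hA.1.1 le_rfl, by rw [card_sdiff_of_subset hA.2, hA.1.2]⟩
    · simp only [coe_filter, mem_powersetCard, Set.mem_ofPred_eq] at hA hB
      rw [← sdiff_union_of_subset hA.2, ← sdiff_union_of_subset hB.2]
      exact congrArg (· ∪ J) h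
  · rw [filter_false_of_mem fun A hA hJA => hJU (hJA.trans (mem_powersetCard.1 hA).1)]
    simp

theorem card_filter_le_card_inter_mul_choose_le (U S : Finset α) (m t j : ℕ) :
    #{A ∈ U.powersetCard m | t ≤ #(A ∩ S)} * t.choose j ≤
      (#S).choose j * (#U - j).choose (m - j) := by
  rw [← card_powersetCard j S]
  refine card_mul_le_card_mul (fun (A J : Finset α) => J ⊆ A) (fun A hA => ?_) (fun J hJ => ?_)
  · rw [mem_filter] at hA
    calc t.choose j ≤ (#(A ∩ S)).choose j := Nat.choose_le_choose j hA.2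
      _ = #((A ∩ S).powersetCard j) := (card_powersetCard _ _).symm
      _ ≤ #(bipartiteAbove (fun A J => J ⊆ A) (S.powersetCard j) A) := by
        refine card_le_card fun J hJ => ?_
        rw [mem_powersetCard, subset_inter_iff] at hJ
        exact mem_filter.2 ⟨mem_powersetCard.2 ⟨hJ.1.2, hJ.2⟩, hJ.1.1⟩
  · rw [← (mem_powersetCard.1 hJ).2]
    exact (card_le_card (filter_subset_filter _ (filter_subset _ _))).trans
      (card_filter_powersetCard_superset_le U J m)

theorem card_filter_le_card_inter_mul_pow_le (U S : Finset α) {m t j : ℕ} (hjt : j ≤ t) :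
    #{A ∈ U.powersetCard m | t ≤ #(A ∩ S)} * ((t + 1 - j) * #U) ^ j ≤
      (#S * m) ^ j * (#U).choose m := by
  by_cases hmt : t ≤ m ∧ m ≤ #U
  swap
  · rw [filter_false_of_mem fun A hA hA' => hmt ⟨?_, ?_⟩]
    · simp
    · exact hA'.trans ((card_le_card inter_subset_left).trans (mem_powersetCard.1 hA).2.le)
    · exact (mem_powersetCard.1 hA).2 ▸ card_le_card (mem_powersetCard.1 hA).1
  obtain ⟨htm, hmU⟩ := hmt
  refine Nat.le_of_mul_le_mul_right ?_ (Nat.choose_pos hjt)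
  set 𝒜 := U.powersetCard m
  calc #{A ∈ 𝒜 | t ≤ #(A ∩ S)} * ((t + 1 - j) * #U) ^ j * t.choose j
      = (#{A ∈ 𝒜 | t ≤ #(A ∩ S)} * t.choose j) * ((t + 1 - j) ^ j * #U ^ j) := by ring
    _ ≤ ((#S).choose j * (#U - j).choose (m - j)) * ((t + 1 - j) ^ j * #U ^ j) :=
        Nat.mul_le_mul_right _ (card_filter_le_card_inter_mul_choose_le U S m t j)
    _ = ((#S).choose j * (t + 1 - j) ^ j) * ((#U - j).choose (m - j) * #U ^ j) := by ring
    _ ≤ (#S ^ j * t.choose j) * (m ^ j * (#U).choose m) :=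
        Nat.mul_le_mul (Nat.choose_mul_sub_pow_le _ _ _)
          (Nat.choose_sub_mul_pow_le (hjt.trans htm) hmU)
    _ = (#S * m) ^ j * (#U).choose m * t.choose j := by ring

end Finset

namespace TwwPaper

open Finset Real

variable {V : Type*}

theorem edgeCount_eq_card_edgeFinset (G : SimpleGraph V) [Fintype G.edgeSet] :
    edgeCount G = #G.edgeFinset := by
  rw [edgeCount, Nat.card_eq_fintype_card, SimpleGraph.edgeFinset_card]

open Classical in
theorem card_filter_edgeCount_eq_card_powersetCard [Fintype V] [DecidableEq V]
    (p : Finset (Sym2 V) → Prop) (m : ℕ) :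
    #{G : SimpleGraph V | edgeCount G = m ∧ p G.edgeFinset} =
      #{A ∈ (⊤ : SimpleGraph V).edgeFinset.powersetCard m | p A} := by
  -- `fromEdgeSet` comes with its own `Fintype` instance on the edge set, hence the binder.
  have hE : ∀ A ⊆ (⊤ : SimpleGraph V).edgeFinset,
      ∀ {_ : Fintype (SimpleGraph.fromEdgeSet (A : Set (Sym2 V))).edgeSet},
      (SimpleGraph.fromEdgeSet (A : Set (Sym2 V))).edgeFinset = A := by
    intro A hA _
    rw [← coe_inj, SimpleGraph.coe_edgeFinset, SimpleGraph.edgeSet_fromEdgeSet, sdiff_eq_left,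
      Set.disjoint_left]
    intro e he
    simpa using hA he
  refine card_nbij' (fun G => G.edgeFinset) (fun A => SimpleGraph.fromEdgeSet A) ?_ ?_ ?_ ?_
  · intro G hG
    simp only [coe_filter, mem_univ, true_and, Set.mem_ofPred_eq,
      edgeCount_eq_card_edgeFinset] at hG
    simp only [coe_filter, mem_powersetCard, Set.mem_ofPred_eq]
    exact ⟨⟨SimpleGraph.edgeFinset_mono le_top, hG.1⟩, hG.2⟩
  · intro A hA
    simp only [coe_filter, mem_powersetCard, Set.mem_ofPred_eq] at hA
    simp only [coe_filter, mem_univ, true_and, Set.mem_ofPred_eq, edgeCount_eq_card_edgeFinset,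
      hE A hA.1.1]
    exact ⟨hA.1.2, hA.2⟩
  · intro G _
    simp
  · intro A hA
    simp only [coe_filter, mem_powersetCard, Set.mem_ofPred_eq] at hA
    exact hE A hA.1.1

theorem edgesIn_eq_card_edgeFinset_inter_sym2 [DecidableEq V] (G : SimpleGraph V)
    [Fintype G.edgeSet] (X : Finset V) : edgesIn G X = #(G.edgeFinset ∩ X.sym2) := by
  rw [edgesIn, ← Nat.card_eq_finsetCard]
  congr
  ext e
  simp [mem_sym2_iff]

theorem card_edgeCount_eq_choose [Fintype V] [DecidableEq V] (m : ℕ) :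
    Nat.card {G : SimpleGraph V // edgeCount G = m} =
      ((Fintype.card V).choose 2).choose m := by
  classical
  have := card_filter_edgeCount_eq_card_powersetCard (V := V) (fun _ => True) m
  simp only [and_true, filter_true] at this
  rw [Nat.card_eq_fintype_card, Fintype.card_subtype, this, card_powersetCard,
    SimpleGraph.card_edgeFinset_top_eq_card_choose_two]

theorem card_filter_le_edgesIn_mul_pow_le [Fintype V] [DecidableEq V] (X : Finset V)
    {m t j : ℕ} (hjt : j ≤ t) :
    #{G : SimpleGraph V | edgeCount G = m ∧ t ≤ edgesIn G X} *
        ((t + 1 - j) * (Fintype.card V).choose 2) ^ j ≤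
      ((#X + 1).choose 2 * m) ^ j * ((Fintype.card V).choose 2).choose m := by
  classical
  have := card_filter_edgeCount_eq_card_powersetCard (V := V)
    (fun A : Finset (Sym2 V) => t ≤ #(A ∩ X.sym2)) m
  simp only [← edgesIn_eq_card_edgeFinset_inter_sym2] at this
  rw [this, ← SimpleGraph.card_edgeFinset_top_eq_card_choose_two, ← card_sym2]
  -- the two sides differ only in the decidability instances of the filter
  convert card_filter_le_card_inter_mul_pow_le (m := m) (⊤ : SimpleGraph V).edgeFinset X.sym2 hjt

theorem edgesIn_le_edgeCount [Fintype V] [DecidableEq V] (G : SimpleGraph V) (X : Finset V) :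
    edgesIn G X ≤ edgeCount G := by
  classical
  rw [edgesIn_eq_card_edgeFinset_inter_sym2, edgeCount_eq_card_edgeFinset]
  exact card_le_card inter_subset_left

theorem card_filter_le_edgesIn_le_pow_mul [Fintype V] [DecidableEq V] (X : Finset V)
    {m t j : ℕ} (hjt : j ≤ t) (hV : 2 ≤ Fintype.card V) {q : ℝ}
    (hq : (((#X + 1).choose 2 * m : ℕ) : ℝ) ≤
      q * ((t + 1 - j) * (Fintype.card V).choose 2 : ℕ)) :
    (#{G : SimpleGraph V | edgeCount G = m ∧ t ≤ edgesIn G X} : ℝ) ≤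
      q ^ j * ((Fintype.card V).choose 2).choose m := by
  set N := (Fintype.card V).choose 2
  have hpos : (0 : ℝ) < ((t + 1 - j) * N : ℕ) := by
    exact_mod_cast Nat.mul_pos (by omega) (Nat.choose_pos hV)
  have hq0 : 0 ≤ q := nonneg_of_mul_nonneg_left ((Nat.cast_nonneg _).trans hq) hpos
  refine le_of_mul_le_mul_right (a := (((t + 1 - j) * N : ℕ) : ℝ) ^ j) ?_ (by positivity)
  calc _ ≤ ((((#X + 1).choose 2 * m : ℕ) : ℝ)) ^ j * N.choose m := by
        exact_mod_cast card_filter_le_edgesIn_mul_pow_le X hjt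
    _ ≤ (q * ((t + 1 - j) * N : ℕ)) ^ j * N.choose m := by gcongr
    _ = _ := by ring

theorem succ_choose_two_mul_le {n s m t d : ℕ} (hs : 101 ≤ s) (hsn : s ≤ n)
    (hlog : log n ≤ 101 / 100 * log s) (ht : s * log s / 10 < t) (htm : t ≤ m)
    (hm : (m : ℝ) ≤ n * log n / 11) (hd : 9 / 10 * (t : ℝ) ≤ d) :
    (((s + 1).choose 2 * m : ℕ) : ℝ) ≤ 24 / 25 * ((d * n.choose 2 : ℕ) : ℝ) := by
  have hs' : (101 : ℝ) ≤ s := by exact_mod_cast hs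
  have hn : (101 : ℝ) ≤ n := hs'.trans (by exact_mod_cast hsn)
  have ha : 0 < log s := log_pos (by linarith)
  have hb : 0 ≤ log n := log_nonneg (by linarith)
  have hsa_t : s * log s ≤ 10 * t := by linarith
  have hsa_m : s * log s ≤ 10 * m := hsa_t.trans (by exact_mod_cast Nat.mul_le_mul_left 10 htm)
  have hsa : 0 ≤ s * log s := by positivity
  have key :
      ((s + 1) * s * m) * log s ^ 2 ≤ (24 / 25 * (9 / 10) * t * (n * (n - 1))) * log s ^ 2 :=
    calc ((s + 1) * s * m) * log s ^ 2
        ≤ (101 / 100 * s) * s * m * log s ^ 2 := by gcongr; linarith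
      _ = 101 / 100 * (s * log s) * (s * log s) * m := by ring
      -- bounding one factor `s log s` by `10 m ≤ (10/11) n log n` is what keeps `s` away from `n`
      _ ≤ 101 / 100 * (10 * t) * (10 * m) * m := by gcongr
      _ = 101 * t * m ^ 2 := by ring
      _ ≤ 101 * t * (n * (101 / 100 * log s) / 11) ^ 2 := by gcongr; exact hm.trans (by gcongr)
      _ = (101 * (101 / 100) ^ 2 / 121 * n ^ 2) * (t * log s ^ 2) := by ring
      _ ≤ (24 / 25 * (9 / 10) * (n * (n - 1))) * (t * log s ^ 2) :=
        mul_le_mul_of_nonneg_right (by nlinarith) (by positivity)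
      _ = (24 / 25 * (9 / 10) * t * (n * (n - 1))) * log s ^ 2 := by ring
  have key' := le_of_mul_le_mul_right key (by positivity)
  have hnn : (0 : ℝ) ≤ n * (n - 1) := by nlinarith
  push_cast
  rw [Nat.cast_choose_two, Nat.cast_choose_two]
  push_cast
  nlinarith [mul_le_mul_of_nonneg_right hd hnn]

theorem card_filter_lt_edgesIn_le [Fintype V] [DecidableEq V] {α : ℝ} {m : ℕ} (X : Finset V)
    (hαn : 100 ≤ α * Fintype.card V)
    (hlog : log (Fintype.card V) ≤ 101 / 100 * log (α * Fintype.card V))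
    (hm : (m : ℝ) ≤ Fintype.card V * log (Fintype.card V) / 11)
    (hX : α * Fintype.card V + 1 ≤ #X) :
    (#{G : SimpleGraph V | edgeCount G = m ∧ #X * log #X / 10 < edgesIn G X} : ℝ) ≤
      exp (-(α * Fintype.card V * log (α * Fintype.card V)) / 2500) *
        ((Fintype.card V).choose 2).choose m := by
  set n := Fintype.card V
  set s := #X
  have hsn : s ≤ n := card_le_univ X
  have hs : 101 ≤ s := by exact_mod_cast (show (101 : ℝ) ≤ s by linarith)
  have hlog_s : log (α * n) ≤ log s := log_le_log (by linarith) (by linarith)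
  have hsa : 0 ≤ s * log s / 10 := by
    have : 0 ≤ log s := log_nonneg (by norm_cast; omega)
    positivity
  set t := ⌊s * log s / 10⌋₊ + 1
  have ht : s * log s / 10 < t := by push_cast [t]; exact Nat.lt_floor_add_one _
  have hfilter (G : SimpleGraph V) : s * log s / 10 < edgesIn G X ↔ t ≤ edgesIn G X := by
    rw [← Nat.floor_lt hsa, Nat.lt_iff_add_one_le]
  simp only [hfilter]
  rcases lt_or_ge m t with hmt | htm
  · rw [filter_false_of_mem fun G _ hG => hmt.not_ge
      (hG.2.trans (hG.1 ▸ edgesIn_le_edgeCount G X))]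
    simp only [card_empty, Nat.cast_zero]
    positivity
  set j := t / 10 + 1
  have hjt : j ≤ t := by omega
  have hd : 9 / 10 * (t : ℝ) ≤ (t + 1 - j : ℕ) := by
    rw [show t + 1 - j = t - t / 10 by omega, Nat.cast_sub (Nat.div_le_self t 10)]
    linarith [Nat.cast_div_le (m := t) (n := 10) (α := ℝ)]
  have hj : α * n * log (α * n) / 100 ≤ j := by
    have htj : (t : ℝ) ≤ 10 * j := by exact_mod_cast (show t ≤ 10 * j by omega)
    have : α * n * log (α * n) ≤ s * log s :=
      mul_le_mul (by linarith) hlog_s (log_nonneg (by linarith)) (Nat.cast_nonneg s)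
    linarith
  calc _ ≤ (24 / 25 : ℝ) ^ j * (n.choose 2).choose m :=
        card_filter_le_edgesIn_le_pow_mul X hjt (by omega)
          (succ_choose_two_mul_le hs hsn (hlog.trans (by gcongr)) ht htm hm hd)
    _ ≤ exp (-(α * n * log (α * n)) / 2500) * (n.choose 2).choose m := by
      gcongr
      calc (24 / 25 : ℝ) ^ j ≤ exp (-(1 / 25)) ^ j := by
            gcongr; linarith [one_sub_le_exp_neg (1 / 25 : ℝ)]
        _ = exp (-(j / 25)) := by rw [← exp_nat_mul]; ring_nf
        _ ≤ _ := by gcongr; linarith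

open Filter in
theorem eventually_two_pow_mul_exp_le {α δ : ℝ} (hα : 0 < α) (hδ : 0 < δ) :
    ∀ᶠ n : ℕ in atTop, 100 ≤ α * n ∧ log n ≤ 101 / 100 * log (α * n) ∧
      2 ^ n * exp (-(α * n * log (α * n)) / 2500) ≤ δ := by
  have hαn : Tendsto (fun n : ℕ => α * n) atTop atTop :=
    tendsto_natCast_atTop_atTop.const_mul_atTop hα
  have hlog := tendsto_log_atTop.comp hαn
  filter_upwards [hαn.eventually_ge_atTop 100, hlog.eventually_ge_atTop (-100 * log α),
    hlog.eventually_ge_atTop (2500 * (log 2 + 1) / α),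
    tendsto_natCast_atTop_atTop.eventually_ge_atTop (-log δ)] with n h100 hL1 hL2 hn
  simp only [Function.comp_apply] at hL1 hL2
  have hn0 : (n : ℝ) ≠ 0 := by rintro h; rw [h, mul_zero] at h100; norm_num at h100
  refine ⟨h100, ?_, ?_⟩
  · rw [log_mul hα.ne' hn0] at hL1 ⊢
    linarith
  · have hL : 2500 * (log 2 + 1) ≤ α * log (α * n) := by
      rwa [div_le_iff₀' hα] at hL2
    calc 2 ^ n * exp (-(α * n * log (α * n)) / 2500)
        = exp (n * log 2 + -(n * (α * log (α * n)) / 2500)) := by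
          rw [exp_add, exp_nat_mul, exp_log two_pos]
          ring_nf
      _ ≤ exp (log δ) := by
          gcongr
          nlinarith [Nat.cast_nonneg (α := ℝ) n]
      _ = δ := exp_log hδ

theorem card_not_sparse_le [Fintype V] [DecidableEq V] {α : ℝ} {m : ℕ}
    (hαn : 100 ≤ α * Fintype.card V)
    (hlog : log (Fintype.card V) ≤ 101 / 100 * log (α * Fintype.card V))
    (hm : (m : ℝ) ≤ Fintype.card V * log (Fintype.card V) / 11) :
    (Nat.card {G : SimpleGraph V // edgeCount G = m ∧ ¬ ∀ X : Finset V,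
        α * Fintype.card V + 1 ≤ #X → (edgesIn G X : ℝ) ≤ #X * log #X / 10} : ℝ) ≤
      2 ^ Fintype.card V * exp (-(α * Fintype.card V * log (α * Fintype.card V)) / 2500) *
        ((Fintype.card V).choose 2).choose m := by
  classical
  set large : Finset (Finset V) := {X | α * Fintype.card V + 1 ≤ #X}
  set dense := fun X : Finset V =>
    ({G : SimpleGraph V | edgeCount G = m ∧ #X * log #X / 10 < edgesIn G X} :
      Finset (SimpleGraph V))
  have hunion : ({G : SimpleGraph V | edgeCount G = m ∧ ¬ ∀ X : Finset V,
      α * Fintype.card V + 1 ≤ #X → (edgesIn G X : ℝ) ≤ #X * log #X / 10} : Finset _) ⊆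
      large.biUnion dense := by
    intro G hG
    simp only [mem_filter, mem_univ, true_and, not_forall, not_le] at hG
    obtain ⟨hGm, X, hX, hGX⟩ := hG
    exact mem_biUnion.2
      ⟨X, mem_filter.2 ⟨mem_univ X, hX⟩, mem_filter.2 ⟨mem_univ G, hGm, hGX⟩⟩
  rw [Nat.card_eq_fintype_card, Fintype.card_subtype, mul_assoc]
  calc _ ≤ ((∑ X ∈ large, #(dense X) : ℕ) : ℝ) := by
        exact_mod_cast (card_le_card hunion).trans card_biUnion_le
    _ ≤ ∑ X ∈ large, exp (-(α * Fintype.card V * log (α * Fintype.card V)) / 2500) *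
          ((Fintype.card V).choose 2).choose m := by
        push_cast
        exact sum_le_sum fun X hX =>
          card_filter_lt_edgesIn_le X hαn hlog hm (mem_filter.1 hX).2
    _ ≤ _ := by
        rw [sum_const, nsmul_eq_mul]
        gcongr
        exact_mod_cast (card_le_univ large).trans_eq (by simp)

theorem statement_11 (α : ℝ) (hα : 0 < α) :
    ∀ δ : ℝ, 0 < δ → ∃ N : ℕ, ∀ n : ℕ, N ≤ n → ∀ m : ℕ,
      n ≤ m → (m : ℝ) ≤ (n : ℝ) * Real.log n / 11 →
      (Nat.card {G : SimpleGraph (Fin n) // edgeCount G = m ∧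
          ¬ (∀ X : Finset (Fin n), α * n + 1 ≤ (X.card : ℝ) →
              (edgesIn G X : ℝ) ≤ (X.card : ℝ) * Real.log X.card / 10)} : ℝ) ≤
        δ * Nat.card {G : SimpleGraph (Fin n) // edgeCount G = m} := by
  intro δ hδ
  obtain ⟨N, hN⟩ := Filter.eventually_atTop.1 (eventually_two_pow_mul_exp_le hα hδ)
  refine ⟨N, fun n hn m _ hm => ?_⟩
  obtain ⟨h100, hlog, hδn⟩ := hN n hn
  rw [card_edgeCount_eq_choose, Fintype.card_fin]
  have h := card_not_sparse_le (V := Fin n) (α := α) (m := m) (by rwa [Fintype.card_fin])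
    (by rwa [Fintype.card_fin]) (by rwa [Fintype.card_fin])
  rw [Fintype.card_fin] at h
  calc _ ≤ 2 ^ n * exp (-(α * n * log (α * n)) / 2500) * (n.choose 2).choose m := h
    _ ≤ δ * (n.choose 2).choose m := by gcongr

end TwwPaper
end
end
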